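/- There exist constants c, c' > 0 such that for all n ≥ 1: r_3(ℤ_4^n) ≥ c · 2.622^n and r_4(ℤ_4^n) ≥ c' · 3.363^n. -/

import Mathlib

/-!
In `ℤ/4` an arithmetic progression `x, x + d, x + 2d, …` of length 3 or 4 is proper exactly when
`2d ≠ 0`. Hence a progression in a product is proper as soon as one of its components is, so
products of progression-free sets are progression-free.

Inside the cube `{0,1,2}ⁿ`, a 3-term progression with `2d_j ≠ 0` must read `0,1,2` or `2,1,0` in
coordinate `j`, and coordinates with `2d_j = 0` keep their entry `1` or non-`1`. So the number of
entries equal to `1` grows from `x` to `x + d` by the number of such `j`, which lies in `[1, n]`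
for a proper progression: fixing that number modulo `n + 1` leaves a 3-AP-free set, and one of
these classes has at least `3ⁿ / (n + 1)` elements.

The cube itself is 4-AP-free, because four terms with `2d_j ≠ 0` cover all of `ℤ/4`, including
`3`. Multiplying `{0,1,2}ʳ` with copies of a 4-AP-free subset of `(ℤ/4)⁴` of size
`128 > 3.363⁴` gives the second bound.
-/

open Finset

/-- `S ⊆ (ℤ/mℤ)^n` contains no proper `k`-term arithmetic progression. -/
def ProgFree (m k : ℕ) {n : ℕ} (S : Finset (Fin n → ZMod m)) : Prop :=
  ¬ ∃ x d : Fin n → ZMod m,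
      (Function.Injective fun i : Fin k => x + (i : ℕ) • d) ∧
      ∀ i : Fin k, x + (i : ℕ) • d ∈ S

/-- Maximal size of a subset of `(ℤ/mℤ)^n` without a proper `k`-term AP. -/
noncomputable def rAP (k m n : ℕ) : ℕ :=
  sSup {c : ℕ | ∃ S : Finset (Fin n → ZMod m), ProgFree m k S ∧ S.card = c}

section Progressions

theorem injective_add_nsmul_iff_two_nsmul_ne_zero {G : Type*} [AddLeftCancelMonoid G] {d : G}
    (hd : 4 • d = 0) {k : ℕ} (hk3 : 3 ≤ k) (hk4 : k ≤ 4) (x : G) :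
    Function.Injective (fun i : Fin k => x + (i : ℕ) • d) ↔ 2 • d ≠ 0 := by
  rw [show (fun i : Fin k => x + (i : ℕ) • d) = (x + ·) ∘ fun i : Fin k => (i : ℕ) • d from rfl,
    (add_right_injective x).of_comp_iff]
  constructor
  · intro h h2
    exact absurd (@h ⟨0, by omega⟩ ⟨2, by omega⟩ (by simp [h2])) (by simp [Fin.ext_iff])
  · intro h2 i j hij
    have hord : addOrderOf d = 2 ^ (1 + 1) :=
      addOrderOf_eq_prime_pow (by simpa using h2) (by simpa using hd)
    exact Fin.ext (nsmul_injOn_Iio_addOrderOf (by simp [hord]; omega) (by simp [hord]; omega) hij)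

variable {k n : ℕ}

theorem progFree_four_iff (hk3 : 3 ≤ k) (hk4 : k ≤ 4) {S : Finset (Fin n → ZMod 4)} :
    ProgFree 4 k S ↔ ∀ x d : Fin n → ZMod 4, 2 • d ≠ 0 → ¬ ∀ i : Fin k, x + (i : ℕ) • d ∈ S := by
  have hd (d : Fin n → ZMod 4) : 4 • d = 0 := by
    ext j
    exact (by decide : ∀ a : ZMod 4, 4 • a = 0) (d j)
  simp only [ProgFree, not_exists, not_and,
    injective_add_nsmul_iff_two_nsmul_ne_zero (hd _) hk3 hk4]

theorem bddAbove_card_progFree {m : ℕ} [NeZero m] :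
    BddAbove {c : ℕ | ∃ S : Finset (Fin n → ZMod m), ProgFree m k S ∧ S.card = c} :=
  ⟨Fintype.card (Fin n → ZMod m), by rintro _ ⟨T, -, rfl⟩; exact card_le_univ T⟩

theorem card_le_rAP {m : ℕ} [NeZero m] {S : Finset (Fin n → ZMod m)} (hS : ProgFree m k S) :
    #S ≤ rAP k m n :=
  le_csSup bddAbove_card_progFree ⟨S, hS, rfl⟩

theorem exists_progFree_card_eq_rAP {m : ℕ} [NeZero m] (hk : 0 < k) :
    ∃ S : Finset (Fin n → ZMod m), ProgFree m k S ∧ #S = rAP k m n := by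
  have hempty : ProgFree m k (∅ : Finset (Fin n → ZMod m)) := fun ⟨_, _, _, hmem⟩ =>
    notMem_empty _ (hmem ⟨0, hk⟩)
  exact Nat.sSup_mem (s := {c : ℕ | ∃ S : Finset (Fin n → ZMod m), ProgFree m k S ∧ #S = c})
    ⟨0, ∅, hempty, rfl⟩ bddAbove_card_progFree

theorem progFree_map_appendEquiv {a b : ℕ} (hk3 : 3 ≤ k) (hk4 : k ≤ 4)
    {S : Finset (Fin a → ZMod 4)} {T : Finset (Fin b → ZMod 4)}
    (hS : ProgFree 4 k S) (hT : ProgFree 4 k T) :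
    ProgFree 4 k ((S ×ˢ T).map (Fin.appendEquiv a b).toEmbedding) := by
  rw [progFree_four_iff hk3 hk4] at hS hT ⊢
  intro x d hd hmem
  have hmem' (i : Fin k) := by
    simpa only [mem_map_equiv, Fin.appendEquiv_symm_apply, mem_product] using hmem i
  obtain ⟨j, hj⟩ := Function.ne_iff.1 hd
  cases j using Fin.addCases with
  | left j => exact hS _ _ (Function.ne_iff.2 ⟨j, hj⟩) fun i => (hmem' i).1
  | right j => exact hT _ _ (Function.ne_iff.2 ⟨j, hj⟩) fun i => (hmem' i).2

theorem rAP_mul_le_rAP_add (hk3 : 3 ≤ k) (hk4 : k ≤ 4) (a b : ℕ) :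
    rAP k 4 a * rAP k 4 b ≤ rAP k 4 (a + b) := by
  obtain ⟨S, hS, hSc⟩ := exists_progFree_card_eq_rAP (m := 4) (n := a) (by omega : 0 < k)
  obtain ⟨T, hT, hTc⟩ := exists_progFree_card_eq_rAP (m := 4) (n := b) (by omega : 0 < k)
  rw [← hSc, ← hTc, ← card_product, ← card_map (Fin.appendEquiv a b).toEmbedding]
  exact card_le_rAP (progFree_map_appendEquiv hk3 hk4 hS hT)

end Progressions

section Cube

variable {n : ℕ}

def cube (n : ℕ) : Finset (Fin n → ZMod 4) :=
  Fintype.piFinset fun _ => {0, 1, 2}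

theorem card_cube (n : ℕ) : #(cube n) = 3 ^ n := by
  rw [cube, Fintype.card_piFinset_const]
  rfl

theorem progFree_cube (n : ℕ) : ProgFree 4 4 (cube n) := by
  rw [progFree_four_iff (by norm_num) le_rfl]
  intro x d hd hmem
  obtain ⟨j, hj⟩ := Function.ne_iff.1 hd
  have hcoord : ∀ a b : ZMod 4,
      (∀ i : Fin 4, a + (i : ℕ) • b ∈ ({0, 1, 2} : Finset (ZMod 4))) → 2 • b = 0 := by
    decide
  exact hj (hcoord (x j) (d j) fun i => Fintype.mem_piFinset.1 (hmem i) j)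

def onesCount (v : Fin n → ZMod 4) : ℕ := #{i | v i = 1}

theorem onesCount_add {x d : Fin n → ZMod 4} (hmem : ∀ i : Fin 3, x + (i : ℕ) • d ∈ cube n) :
    onesCount (x + d) = onesCount x + #{i | 2 • d i ≠ 0} := by
  have hcoord : ∀ a b : ZMod 4,
      (∀ i : Fin 3, a + (i : ℕ) • b ∈ ({0, 1, 2} : Finset (ZMod 4))) →
        (a + b = 1 ↔ a = 1 ∨ 2 • b ≠ 0) ∧ ¬ (a = 1 ∧ 2 • b ≠ 0) := by
    decide
  have h (j : Fin n) := hcoord (x j) (d j) fun i => Fintype.mem_piFinset.1 (hmem i) j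
  rw [onesCount, onesCount, ← card_union_of_disjoint]
  · congr 1
    ext j
    simpa using (h j).1
  · exact disjoint_filter.2 fun j _ h1 h2 => (h j).2 ⟨h1, h2⟩

def weightClass (n : ℕ) (r : ZMod (n + 1)) : Finset (Fin n → ZMod 4) :=
  {v ∈ cube n | (onesCount v : ZMod (n + 1)) = r}

theorem progFree_weightClass (r : ZMod (n + 1)) : ProgFree 4 3 (weightClass n r) := by
  rw [progFree_four_iff le_rfl (by norm_num)]
  intro x d hd hmem
  simp only [weightClass, mem_filter] at hmem
  have h0 := (hmem 0).2
  have h1 := (hmem 1).2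
  simp only [Fin.val_zero, zero_smul, add_zero, Fin.val_one, one_smul] at h0 h1
  rw [onesCount_add fun i => (hmem i).1, Nat.cast_add, h0, add_eq_left,
    ZMod.natCast_eq_zero_iff] at h1
  have hlt : #{i | 2 • d i ≠ 0} < n + 1 := Nat.lt_succ_of_le ((card_filter_le _ _).trans (by simp))
  have hzero := Nat.eq_zero_of_dvd_of_lt h1 hlt
  simp only [card_eq_zero, filter_eq_empty_iff, mem_univ, not_not, true_implies] at hzero
  exact hd (funext hzero)

theorem exists_le_card_weightClass (n : ℕ) :
    ∃ r, (3 ^ n / (n + 1) : ℝ) ≤ #(weightClass n r) := by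
  obtain ⟨r, -, hr⟩ := exists_le_card_fiber_of_nsmul_le_card_of_maps_to
    (f := fun v : Fin n → ZMod 4 => (onesCount v : ZMod (n + 1))) (s := cube n)
    (fun _ _ => mem_univ _) univ_nonempty (b := (3 ^ n / (n + 1) : ℝ))
    (by
      rw [card_univ, ZMod.card, card_cube, nsmul_eq_mul]
      push_cast
      exact (mul_div_cancel₀ _ (by positivity)).le)
  exact ⟨r, hr⟩

end Cube

section Lift

variable {n : ℕ}

def lowBit : ZMod 4 →+* ZMod 2 := ZMod.castHom (by norm_num) (ZMod 2)

def highBit (a : ZMod 4) : ZMod 2 := (a.val / 2 : ℕ)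

/-- Writing `v = lowBit v + 2 • highBit v` coordinatewise, `x` and `x + 2 • d` have the same low
bits while their high bits differ by the low bits of `d`; membership of both in `liftSet ψ` thus
forces `ψ (lowBit ∘ x) ⬝ᵥ (lowBit ∘ d) = 0`. -/
def liftSet (ψ : (Fin n → ZMod 2) → Fin n → ZMod 2) : Finset (Fin n → ZMod 4) :=
  {v | ψ (lowBit ∘ v) ⬝ᵥ (highBit ∘ v) = 0}

theorem dotProduct_lowBit_eq_zero {ψ : (Fin n → ZMod 2) → Fin n → ZMod 2} {x d : Fin n → ZMod 4}
    (hx : x ∈ liftSet ψ) (hx2 : x + 2 • d ∈ liftSet ψ) : ψ (lowBit ∘ x) ⬝ᵥ (lowBit ∘ d) = 0 := by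
  have hcoord : ∀ a b : ZMod 4,
      lowBit (a + 2 • b) = lowBit a ∧ highBit (a + 2 • b) = highBit a + lowBit b := by
    decide
  have hlow : lowBit ∘ (x + 2 • d) = lowBit ∘ x := funext fun j => (hcoord (x j) (d j)).1
  have hhigh : highBit ∘ (x + 2 • d) = highBit ∘ x + lowBit ∘ d :=
    funext fun j => (hcoord (x j) (d j)).2
  simp only [liftSet, mem_filter, mem_univ, true_and] at hx hx2
  rwa [hlow, hhigh, dotProduct_add, hx, zero_add] at hx2

theorem progFree_liftSet {ψ : (Fin n → ZMod 2) → Fin n → ZMod 2}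
    (hψ : ∀ u δ, δ ≠ 0 → ψ u ⬝ᵥ δ ≠ 0 ∨ ψ (u + δ) ⬝ᵥ δ ≠ 0) : ProgFree 4 4 (liftSet ψ) := by
  rw [progFree_four_iff (by norm_num) le_rfl]
  intro x d hd hmem
  have hδ : lowBit ∘ d ≠ 0 := fun h => hd <| funext fun j =>
    (by decide : ∀ b : ZMod 4, lowBit b = 0 → 2 • b = 0) _ (congrFun h j)
  have h0 : x ∈ liftSet ψ := by simpa using hmem 0
  have h1 : x + d ∈ liftSet ψ := by simpa using hmem 1
  have h2 : x + 2 • d ∈ liftSet ψ := by simpa using hmem 2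
  have h3 : x + d + 2 • d ∈ liftSet ψ := by
    convert hmem 3 using 1
    rw [show ((3 : Fin 4) : ℕ) = 3 from rfl]
    abel
  have hlow : lowBit ∘ (x + d) = lowBit ∘ x + lowBit ∘ d := funext fun j => map_add lowBit _ _
  rcases hψ _ _ hδ with h | h
  · exact h (dotProduct_lowBit_eq_zero h0 h2)
  · exact h (hlow ▸ dotProduct_lowBit_eq_zero h1 h3)

def psi4 (u : Fin 4 → ZMod 2) : Fin 4 → ZMod 2 :=
  ![1, u 1 + u 2 + u 3 + u 2 * u 3, u 2 + u 3 + u 1 * u 3, u 3 + u 1 * u 2]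

theorem psi4_dotProduct_ne_zero_or :
    ∀ u δ : Fin 4 → ZMod 2, δ ≠ 0 → psi4 u ⬝ᵥ δ ≠ 0 ∨ psi4 (u + δ) ⬝ᵥ δ ≠ 0 := by
  decide

/-- Since `psi4 u ≠ 0` for every `u`, each fibre of `lowBit ∘ ·` meets `liftSet psi4` in `8` of
its `16` points. -/
theorem card_liftSet_psi4 : #(liftSet psi4) = 128 := by
  set_option maxRecDepth 40000 in decide

end Lift

theorem three_pow_le_rAP_four (n : ℕ) : 3 ^ n ≤ rAP 4 4 n :=
  card_cube n ▸ card_le_rAP (progFree_cube n)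

theorem le_rAP_four_four_four : 128 ≤ rAP 4 4 4 :=
  card_liftSet_psi4 ▸ card_le_rAP (progFree_liftSet psi4_dotProduct_ne_zero_or)

theorem pow_mul_pow_le_rAP_four_four (m r : ℕ) : 128 ^ m * 3 ^ r ≤ rAP 4 4 (4 * m + r) := by
  induction m with
  | zero => simpa using three_pow_le_rAP_four r
  | succ m ih =>
    calc 128 ^ (m + 1) * 3 ^ r = 128 * (128 ^ m * 3 ^ r) := by ring
      _ ≤ rAP 4 4 4 * rAP 4 4 (4 * m + r) := Nat.mul_le_mul le_rAP_four_four_four ih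
      _ ≤ rAP 4 4 (4 * (m + 1) + r) := by
        rw [show 4 * (m + 1) + r = 4 + (4 * m + r) by ring]
        exact rAP_mul_le_rAP_add (by norm_num) le_rfl _ _

theorem three_pow_div_le_rAP_three (n : ℕ) : (3 ^ n / (n + 1) : ℝ) ≤ rAP 3 4 n := by
  obtain ⟨r, hr⟩ := exists_le_card_weightClass n
  exact hr.trans (by exact_mod_cast card_le_rAP (progFree_weightClass r))

theorem le_three_pow_div (n : ℕ) : (1 / 10 : ℝ) * 2.622 ^ n ≤ 3 ^ n / (n + 1) := by
  have hbern : 1 + n * (0.144 : ℝ) ≤ 1.144 ^ n :=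
    (one_add_mul_le_pow (by norm_num) n).trans_eq (by norm_num)
  have hbase : (1.144 : ℝ) ^ n * 2.622 ^ n ≤ 3 ^ n := by
    rw [← mul_pow]
    exact pow_le_pow_left₀ (by norm_num) (by norm_num) n
  rw [le_div_iff₀ (by positivity)]
  nlinarith [pow_nonneg (by norm_num : (0 : ℝ) ≤ 2.622) n, (n.cast_nonneg : (0 : ℝ) ≤ n)]

theorem le_pow_mul_pow (m r : ℕ) (hr : r < 4) :
    (1 / 2 : ℝ) * 3.363 ^ (4 * m + r) ≤ 128 ^ m * 3 ^ r := by
  have h128 : ((3.363 : ℝ) ^ 4) ^ m ≤ 128 ^ m := pow_le_pow_left₀ (by positivity) (by norm_num) m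
  have h3 : (1 / 2 : ℝ) * 3.363 ^ r ≤ 3 ^ r := by interval_cases r <;> norm_num
  calc (1 / 2 : ℝ) * 3.363 ^ (4 * m + r) = ((3.363 : ℝ) ^ 4) ^ m * ((1 / 2) * 3.363 ^ r) := by
        rw [pow_add, pow_mul]; ring
    _ ≤ 128 ^ m * 3 ^ r := mul_le_mul h128 h3 (by positivity) (by positivity)

theorem stmt6 :
    ∃ c c' : ℝ, 0 < c ∧ 0 < c' ∧ ∀ n : ℕ, 1 ≤ n →
      c * 2.622 ^ n ≤ (rAP 3 4 n : ℝ) ∧ c' * 3.363 ^ n ≤ (rAP 4 4 n : ℝ) := by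
  refine ⟨1 / 10, 1 / 2, by norm_num, by norm_num, fun n _ => ⟨?_, ?_⟩⟩
  · exact (le_three_pow_div n).trans (three_pow_div_le_rAP_three n)
  · rw [← Nat.div_add_mod n 4]
    calc (1 / 2 : ℝ) * 3.363 ^ (4 * (n / 4) + n % 4) ≤ 128 ^ (n / 4) * 3 ^ (n % 4) :=
          le_pow_mul_pow _ _ (Nat.mod_lt n (by norm_num))
      _ ≤ rAP 4 4 (4 * (n / 4) + n % 4) := by exact_mod_cast pow_mul_pow_le_rAP_four_four _ _
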